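/- Let q : ℝ×ℝ → ℂ be smooth, a = diag(i,-i), u(x,t) = [[0, q(x,t)],[-q̄(-x,t), 0]], and Q₋₁(x,t) = -(i/2)·[[q(x,t)q̄(-x,t), -q_x(x,t)],[q̄_x(-x,t), -q(x,t)q̄(-x,t)]]. Then the equation u_t = (Q₋₁)_x + [u, Q₋₁] is equivalent to the nonlocal NLS equation q_t(x,t) = (i/2)q_xx(x,t) + i q²(x,t) q̄(-x,t). -/

import Mathlib

open Matrix Complex

noncomputable section

/-- Complex conjugation. -/
def conj' : ℂ → ℂ := starRingEnd ℂ

/-- Partial derivative in `x` of a function of `(x,t)`. -/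
def px (q : ℝ → ℝ → ℂ) : ℝ → ℝ → ℂ := fun x t => deriv (fun y => q y t) x

/-- Second partial derivative in `x`. -/
def pxx (q : ℝ → ℝ → ℂ) : ℝ → ℝ → ℂ := fun x t => deriv (fun y => px q y t) x

/-- Partial derivative in `t`. -/
def pt (q : ℝ → ℝ → ℂ) : ℝ → ℝ → ℂ := fun x t => deriv (fun s => q x s) t

/-- `u(x,t) = [[0, q(x,t)],[-q̄(-x,t), 0]]`. -/
def u13 (q : ℝ → ℝ → ℂ) (x t : ℝ) : Matrix (Fin 2) (Fin 2) ℂ :=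
  !![0, q x t; -conj' (q (-x) t), 0]

/-- `Q₋₁(x,t) = -(i/2)[[q(x,t)q̄(-x,t), -q_x(x,t)],[q̄_x(-x,t), -q(x,t)q̄(-x,t)]]`. -/
def Qm13 (q : ℝ → ℝ → ℂ) (x t : ℝ) : Matrix (Fin 2) (Fin 2) ℂ :=
  (-(Complex.I) / 2) •
    !![q x t * conj' (q (-x) t), -(px q x t);
      conj' (px q (-x) t), -(q x t * conj' (q (-x) t))]

/-- The equation `u_t = (Q₋₁)_x + [u, Q₋₁]` is equivalent to the nonlocal NLS equation
`q_t(x,t) = (i/2)q_xx(x,t) + i q²(x,t) q̄(-x,t)`. -/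
theorem stmt13 (q : ℝ → ℝ → ℂ) (hq : ContDiff ℝ (⊤ : ℕ∞) (fun p : ℝ × ℝ => q p.1 p.2)) :
    (∀ x t, Matrix.of (fun i j => deriv (fun s => u13 q x s i j) t) =
        Matrix.of (fun i j => deriv (fun y => Qm13 q y t i j) x) +
          (u13 q x t * Qm13 q x t - Qm13 q x t * u13 q x t)) ↔
    (∀ x t, pt q x t =
        (Complex.I / 2) * pxx q x t + Complex.I * (q x t)^2 * conj' (q (-x) t)) := by
  have hq1 : ∀ t, ContDiff ℝ (⊤ : ℕ∞) (fun x => q x t) := fun t =>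
    hq.comp (contDiff_id.prodMk contDiff_const)
  have hq2 : ∀ x, ContDiff ℝ (⊤ : ℕ∞) (fun s => q x s) := fun x =>
    hq.comp (contDiff_const.prodMk contDiff_id)
  have hpx : ContDiff ℝ (⊤ : ℕ∞) (fun p : ℝ × ℝ => px q p.1 p.2) := by
    have h : ContDiff ℝ (⊤ : ℕ∞) (fun p : ℝ × ℝ =>
        fderiv ℝ (fun y => q y p.2) p.1 1) :=
      ContDiff.fderiv_apply (f := fun (p : ℝ×ℝ) (y : ℝ) => q y p.2) (g := fun p => p.1)
        (k := fun _ => 1)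
        (hq.comp (contDiff_snd.prodMk (contDiff_snd.comp contDiff_fst)))
        contDiff_fst contDiff_const (by simp)
    simpa [px, fderiv_apply_one_eq_deriv] using h
  have hpx1 : ∀ t, ContDiff ℝ (⊤ : ℕ∞) (fun x => px q x t) := fun t =>
    hpx.comp (contDiff_id.prodMk contDiff_const)
  have hdx : ∀ x t, HasDerivAt (fun y => q y t) (px q x t) x := fun x t =>
    ((hq1 t).differentiable (by simp) x).hasDerivAt
  have hdxx : ∀ x t, HasDerivAt (fun y => px q y t) (pxx q x t) x := fun x t =>
    ((hpx1 t).differentiable (by simp) x).hasDerivAt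
  have hdt : ∀ x t, HasDerivAt (fun s => q x s) (pt q x t) t := fun x t =>
    ((hq2 x).differentiable (by simp) t).hasDerivAt
  have hdxn : ∀ x t, HasDerivAt (fun y => q (-y) t) (-(px q (-x) t)) x := fun x t => by
    have h1 := HasDerivAt.scomp (g₁ := fun y => q y t) (x := x)
      (hdx (-x) t) (hasDerivAt_neg x)
    simpa [Function.comp_def] using h1
  have hdxxn : ∀ x t, HasDerivAt (fun y => px q (-y) t) (-(pxx q (-x) t)) x := fun x t => by
    have h1 := HasDerivAt.scomp (g₁ := fun y => px q y t) (x := x)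
      (hdxx (-x) t) (hasDerivAt_neg x)
    simpa [Function.comp_def] using h1
  -- derivatives of the entries of Qm13 in x
  have D00 : ∀ x t, deriv (fun y => Qm13 q y t 0 0) x =
      -Complex.I/2 * (px q x t * conj' (q (-x) t) + q x t * -(conj' (px q (-x) t))) := by
    intro x t
    have hfe : (fun y => Qm13 q y t 0 0) = fun y => -Complex.I/2 * (q y t * conj' (q (-y) t)) := by
      funext y; simp [Qm13]
    rw [hfe]
    exact (((hdx x t).mul ((hdxn x t).star)).const_mul (-Complex.I/2)).deriv
  have D01 : ∀ x t, deriv (fun y => Qm13 q y t 0 1) x = -Complex.I/2 * -(pxx q x t) := by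
    intro x t
    have hfe : (fun y => Qm13 q y t 0 1) = fun y => -Complex.I/2 * -(px q y t) := by
      funext y; simp [Qm13]
    rw [hfe]
    exact ((hdxx x t).neg.const_mul (-Complex.I/2)).deriv
  have D10 : ∀ x t, deriv (fun y => Qm13 q y t 1 0) x =
      -Complex.I/2 * -(conj' (pxx q (-x) t)) := by
    intro x t
    have hfe : (fun y => Qm13 q y t 1 0) = fun y => -Complex.I/2 * conj' (px q (-y) t) := by
      funext y; simp [Qm13]
    rw [hfe]
    exact (((hdxxn x t).star).const_mul (-Complex.I/2)).deriv
  have D11 : ∀ x t, deriv (fun y => Qm13 q y t 1 1) x =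
      -Complex.I/2 * -(px q x t * conj' (q (-x) t) + q x t * -(conj' (px q (-x) t))) := by
    intro x t
    have hfe : (fun y => Qm13 q y t 1 1) =
        fun y => -Complex.I/2 * -(q y t * conj' (q (-y) t)) := by
      funext y; simp [Qm13]
    rw [hfe]
    exact (((hdx x t).mul ((hdxn x t).star)).neg.const_mul (-Complex.I/2)).deriv
  -- derivatives of the entries of u13 in t
  have U00 : ∀ x t, deriv (fun s => u13 q x s 0 0) t = 0 := by
    intro x t
    have hfe : (fun s => u13 q x s 0 0) = fun _ => (0:ℂ) := by funext s; simp [u13]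
    rw [hfe, deriv_const]
  have U11 : ∀ x t, deriv (fun s => u13 q x s 1 1) t = 0 := by
    intro x t
    have hfe : (fun s => u13 q x s 1 1) = fun _ => (0:ℂ) := by funext s; simp [u13]
    rw [hfe, deriv_const]
  have U01 : ∀ x t, deriv (fun s => u13 q x s 0 1) t = pt q x t := by
    intro x t
    have hfe : (fun s => u13 q x s 0 1) = fun s => q x s := by funext s; simp [u13]
    rw [hfe]; rfl
  have U10 : ∀ x t, deriv (fun s => u13 q x s 1 0) t = -(conj' (pt q (-x) t)) := by
    intro x t
    have hfe : (fun s => u13 q x s 1 0) = fun s => -(conj' (q (-x) s)) := by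
      funext s; simp [u13]
    rw [hfe]
    exact ((hdt (-x) t).star.neg).deriv
  constructor
  · intro h x t
    have e := congrFun (congrFun (h x t) 0) 1
    simp only [Matrix.of_apply, Matrix.add_apply, Matrix.sub_apply] at e
    rw [U01, D01] at e
    simp [u13, Qm13, Matrix.mul_apply, Fin.sum_univ_two] at e
    linear_combination e
  · intro h x t
    have hN := h (-x) t
    simp only [neg_neg] at hN
    have hNc := congrArg conj' hN
    simp only [conj', map_add, _root_.map_mul, map_div₀, map_pow, map_neg, Complex.conj_I,
      map_ofNat, Complex.conj_conj] at hNc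
    have hP := h x t
    ext i j
    simp only [Matrix.of_apply, Matrix.add_apply, Matrix.sub_apply]
    fin_cases i <;> fin_cases j <;>
      simp only [Fin.zero_eta, Fin.mk_one]
    · rw [U00, D00]
      simp [u13, Qm13, Matrix.mul_apply, Fin.sum_univ_two]
      ring
    · rw [U01, D01]
      simp [u13, Qm13, Matrix.mul_apply, Fin.sum_univ_two]
      linear_combination hP
    · rw [U10, D10]
      simp [u13, Qm13, Matrix.mul_apply, Fin.sum_univ_two, conj']
      linear_combination -hNc
    · rw [U11, D11]
      simp [u13, Qm13, Matrix.mul_apply, Fin.sum_univ_two]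
      ring

end
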